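/- Let q ∈ ℍ and n ∈ ℕ, and define gₙ : ℍ → ℍ by gₙ(p) := ((q − Re p)² + |Im p|²)ⁿ. Then for every m ∈ ℕ with m ≤ n and every p ∈ ℍ with Im p ≠ 0, the m-fold application of the right global operator V to gₙ (viewed as a function on ℍ∖ℝ) satisfies V^m(gₙ)(p) = 2^m · (n!/(n−m)!) · ((q − Re p)² + |Im p|²)^{n−m} · ∑_{ℓ=0}^{m} binom(m,ℓ)·(−1)^ℓ·q^ℓ·p^{m−ℓ} (the last sum being the star power (p − q)^{*m}). -/

import Mathlib

noncomputable section
open Quaternion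

/-- The imaginary units of `ℍ`. -/
def e1 : ℍ[ℝ] := ⟨0, 1, 0, 0⟩
def e2 : ℍ[ℝ] := ⟨0, 0, 1, 0⟩
def e3 : ℍ[ℝ] := ⟨0, 0, 0, 1⟩

/-- The right global operator
`Vg(p) = ∂₀g(p) + (∑_{ℓ=1}^{3} p_ℓ ∂_ℓ g(p)) · (Im p)/|Im p|²`. -/
def Vop (g : ℍ[ℝ] → ℍ[ℝ]) (p : ℍ[ℝ]) : ℍ[ℝ] :=
  fderiv ℝ g p 1 +
    (p.imI • fderiv ℝ g p e1 + p.imJ • fderiv ℝ g p e2 + p.imK • fderiv ℝ g p e3) *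
      ((‖Quaternion.im p‖ ^ 2)⁻¹ • Quaternion.im p)

namespace VAux

def starCLM : ℍ[ℝ] →L[ℝ] ℍ[ℝ] :=
  { toFun := star
    map_add' := star_add
    map_smul' := fun r x => by ext <;> simp
    cont := continuous_star }

@[simp] lemma starCLM_apply (x : ℍ[ℝ]) : starCLM x = star x := rfl

def Qf (q x : ℍ[ℝ]) : ℍ[ℝ] := (q - (x.re : ℍ[ℝ])) ^ 2 + ((‖Quaternion.im x‖ ^ 2 : ℝ) : ℍ[ℝ])

def Sf (q : ℍ[ℝ]) (m : ℕ) (x : ℍ[ℝ]) : ℍ[ℝ] :=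
  ∑ l ∈ Finset.range (m + 1), ((m.choose l : ℝ) * (-1 : ℝ) ^ l) • (q ^ l * x ^ (m - l))

lemma smul_combo (L : ℍ[ℝ] →L[ℝ] ℍ[ℝ]) (p : ℍ[ℝ]) :
    p.imI • L e1 + p.imJ • L e2 + p.imK • L e3 = L (Quaternion.im p) := by
  rw [← L.map_smul, ← L.map_smul, ← L.map_smul, ← L.map_add, ← L.map_add]
  congr 1
  ext <;> simp [Quaternion.re_smul] <;> simp [e1, e2, e3]

lemma Vop_apply (g : ℍ[ℝ] → ℍ[ℝ]) (p : ℍ[ℝ]) :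
    Vop g p = fderiv ℝ g p 1 +
      fderiv ℝ g p (Quaternion.im p) * ((‖Quaternion.im p‖ ^ 2)⁻¹ • Quaternion.im p) := by
  rw [Vop, smul_combo]

lemma Vop_congr {g h : ℍ[ℝ] → ℍ[ℝ]} {p : ℍ[ℝ]} (hf : fderiv ℝ g p = fderiv ℝ h p) :
    Vop g p = Vop h p := by rw [Vop, Vop, hf]

lemma im_sq {a : ℍ[ℝ]} (h : a.re = 0) : a * a = -((‖a‖ ^ 2 : ℝ) : ℍ[ℝ]) := by
  have h1 : star a = -a := star_eq_neg.mpr h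
  have h2 := self_mul_star a
  rw [h1, mul_neg] at h2
  have h3 : ((normSq a : ℝ) : ℍ[ℝ]) = ((‖a‖ ^ 2 : ℝ) : ℍ[ℝ]) := by
    rw [sq, normSq_eq_norm_mul_self]
  rw [← h3, ← h2, neg_neg]

def powCLM (a : ℍ[ℝ]) (k : ℕ) (L : ℍ[ℝ] →L[ℝ] ℍ[ℝ]) : ℍ[ℝ] →L[ℝ] ℍ[ℝ] :=
  ∑ i ∈ Finset.range k, ((ContinuousLinearMap.mul ℝ ℍ[ℝ] (a ^ i)).comp
    ((((ContinuousLinearMap.mul ℝ ℍ[ℝ]).flip (a ^ (k - 1 - i))).comp L)))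

lemma powCLM_apply (a : ℍ[ℝ]) (k : ℕ) (L : ℍ[ℝ] →L[ℝ] ℍ[ℝ]) (v : ℍ[ℝ]) :
    powCLM a k L v = ∑ i ∈ Finset.range k, a ^ i * (L v * a ^ (k - 1 - i)) := by
  simp [powCLM]

lemma hasFDerivAt_pow' {f : ℍ[ℝ] → ℍ[ℝ]} {L : ℍ[ℝ] →L[ℝ] ℍ[ℝ]} {x : ℍ[ℝ]}
    (hf : HasFDerivAt f L x) (k : ℕ) :
    HasFDerivAt (fun y => f y ^ k) (powCLM (f x) k L) x := by
  induction k with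
  | zero =>
      have : (fun y : ℍ[ℝ] => f y ^ 0) = fun _ => (1 : ℍ[ℝ]) := by funext y; rw [pow_zero]
      rw [this]
      have h0 : powCLM (f x) 0 L = 0 := ContinuousLinearMap.ext fun v => by simp [powCLM]
      rw [h0]
      exact hasFDerivAt_const 1 x
  | succ k ih =>
      have heq : (fun y : ℍ[ℝ] => f y ^ (k + 1)) = fun y => f y ^ k * f y := by
        funext y; rw [pow_succ]
      rw [heq]
      have h := ih.mul' hf
      have hCLM : f x ^ k • L + (powCLM (f x) k L).smulRight (f x) = powCLM (f x) (k + 1) L := by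
        refine ContinuousLinearMap.ext fun v => ?_
        simp only [powCLM_apply, ContinuousLinearMap.add_apply, ContinuousLinearMap.smul_apply,
          ContinuousLinearMap.smulRight_apply, smul_eq_mul, Finset.sum_mul]
        rw [Finset.sum_range_succ]
        have h0 : k + 1 - 1 - k = 0 := by omega
        rw [h0, pow_zero, mul_one, add_comm]
        congr 1
        refine Finset.sum_congr rfl fun i hi => ?_
        rw [Finset.mem_range] at hi
        have h1 : k - 1 - i + 1 = k + 1 - 1 - i := by omega
        rw [mul_assoc, mul_assoc, ← pow_succ, h1]
      rw [← hCLM]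
      exact h

lemma sum_collapse {a b : ℍ[ℝ]} (h : Commute a b) (k : ℕ) :
    ∑ i ∈ Finset.range k, b ^ i * (a * b ^ (k - 1 - i)) = k • (a * b ^ (k - 1)) := by
  have hterm : ∀ i ∈ Finset.range k, b ^ i * (a * b ^ (k - 1 - i)) = a * b ^ (k - 1) := by
    intro i hi
    rw [Finset.mem_range] at hi
    rw [← mul_assoc, ← (h.pow_right i).eq, mul_assoc, ← pow_add]
    congr 2
    omega
  rw [Finset.sum_congr rfl hterm, Finset.sum_const, Finset.card_range]

lemma coe_re_eq (x : ℍ[ℝ]) : ((x.re : ℝ) : ℍ[ℝ]) = (2⁻¹ : ℝ) • (x + star x) := by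
  rw [self_add_star']
  ext <;> simp <;> ring

lemma im_eq (x : ℍ[ℝ]) : Quaternion.im x = (2⁻¹ : ℝ) • (x - star x) := by
  ext <;> simp [sub_eq_add_neg] <;> ring

lemma Qf_eq (q : ℍ[ℝ]) : Qf q = fun x =>
    (q - (2⁻¹ : ℝ) • (x + star x)) ^ 2 - ((2⁻¹ : ℝ) • (x - star x)) ^ 2 := by
  funext x
  have h2 : ((‖Quaternion.im x‖ ^ 2 : ℝ) : ℍ[ℝ]) = -(Quaternion.im x ^ 2) := by
    rw [show Quaternion.im x ^ 2 = Quaternion.im x * Quaternion.im x from pow_two _,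
      im_sq (Quaternion.re_im x), neg_neg]
  rw [Qf, coe_re_eq, h2, ← im_eq, ← sub_eq_add_neg]

def Lc : ℍ[ℝ] →L[ℝ] ℍ[ℝ] := (2⁻¹ : ℝ) • (ContinuousLinearMap.id ℝ ℍ[ℝ] + starCLM)
def Ld : ℍ[ℝ] →L[ℝ] ℍ[ℝ] := (2⁻¹ : ℝ) • (ContinuousLinearMap.id ℝ ℍ[ℝ] - starCLM)

lemma hc (x : ℍ[ℝ]) : HasFDerivAt (fun y : ℍ[ℝ] => (2⁻¹ : ℝ) • (y + star y)) Lc x :=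
  ((hasFDerivAt_id x).add starCLM.hasFDerivAt).const_smul (2⁻¹ : ℝ)

lemma hd (x : ℍ[ℝ]) : HasFDerivAt (fun y : ℍ[ℝ] => (2⁻¹ : ℝ) • (y - star y)) Ld x :=
  ((hasFDerivAt_id x).sub starCLM.hasFDerivAt).const_smul (2⁻¹ : ℝ)

@[simp] lemma Lc_apply (v : ℍ[ℝ]) : Lc v = (2⁻¹ : ℝ) • (v + star v) := rfl
@[simp] lemma Ld_apply (v : ℍ[ℝ]) : Ld v = (2⁻¹ : ℝ) • (v - star v) := rfl

lemma Lc_one : Lc 1 = 1 := by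
  have h : (1 : ℍ[ℝ]) + star 1 = (2 : ℝ) • 1 := by rw [star_one, two_smul]
  rw [Lc_apply, h, smul_smul]
  norm_num

lemma Ld_one : Ld 1 = 0 := by simp

lemma Lc_im (a : ℍ[ℝ]) (h : a.re = 0) : Lc a = 0 := by
  simp [star_eq_neg.mpr h]

lemma Ld_im (a : ℍ[ℝ]) (h : a.re = 0) : Ld a = a := by
  have h2 : a - star a = (2 : ℝ) • a := by rw [star_eq_neg.mpr h, sub_neg_eq_add, two_smul]
  rw [Ld_apply, h2, smul_smul]
  norm_num

lemma Sf_succ (q : ℍ[ℝ]) (m : ℕ) (p : ℍ[ℝ]) :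
    Sf q (m + 1) p = Sf q m p * p - q * Sf q m p := by
  rw [Sf, Sf, Finset.sum_mul, Finset.mul_sum]
  have hR1 : ∀ l ∈ Finset.range (m + 1),
      (((m.choose l : ℝ) * (-1 : ℝ) ^ l) • (q ^ l * p ^ (m - l))) * p
        = ((m.choose l : ℝ) * (-1 : ℝ) ^ l) • (q ^ l * p ^ (m + 1 - l)) := by
    intro l hl
    rw [Finset.mem_range] at hl
    rw [smul_mul_assoc, mul_assoc, ← pow_succ, show m - l + 1 = m + 1 - l by omega]
  have hR2 : ∀ l ∈ Finset.range (m + 1),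
      q * (((m.choose l : ℝ) * (-1 : ℝ) ^ l) • (q ^ l * p ^ (m - l)))
        = ((m.choose l : ℝ) * (-1 : ℝ) ^ l) • (q ^ (l + 1) * p ^ (m - l)) := by
    intro l _
    rw [mul_smul_comm, ← mul_assoc, ← pow_succ']
  rw [Finset.sum_congr rfl hR1, Finset.sum_congr rfl hR2]
  rw [show m + 1 + 1 = (m + 1) + 1 from rfl, Finset.sum_range_succ']
  have hsplit : ∀ i ∈ Finset.range (m + 1),
      (((m + 1).choose (i + 1) : ℝ) * (-1 : ℝ) ^ (i + 1)) • (q ^ (i + 1) * p ^ (m + 1 - (i + 1)))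
        = (-(((m.choose i : ℝ) * (-1 : ℝ) ^ i))) • (q ^ (i + 1) * p ^ (m - i))
          + (((m.choose (i + 1) : ℝ) * (-1 : ℝ) ^ (i + 1))) • (q ^ (i + 1) * p ^ (m - i)) := by
    intro i _
    rw [show m + 1 - (i + 1) = m - i by omega, ← add_smul]
    congr 1
    rw [Nat.choose_succ_succ]
    push_cast
    ring
  rw [Finset.sum_congr rfl hsplit, Finset.sum_add_distrib]
  have h0 : (((m + 1).choose 0 : ℝ) * (-1 : ℝ) ^ 0) • (q ^ 0 * p ^ (m + 1 - 0)) = p ^ (m + 1) := by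
    simp
  rw [h0]
  have hA : ∑ i ∈ Finset.range (m + 1),
      (-(((m.choose i : ℝ) * (-1 : ℝ) ^ i))) • (q ^ (i + 1) * p ^ (m - i))
      = -∑ i ∈ Finset.range (m + 1), ((m.choose i : ℝ) * (-1 : ℝ) ^ i) • (q ^ (i + 1) * p ^ (m - i)) := by
    rw [← Finset.sum_neg_distrib]
    exact Finset.sum_congr rfl fun i _ => by rw [neg_smul]
  have hB : ∑ i ∈ Finset.range (m + 1),
      (((m.choose (i + 1) : ℝ)) * (-1 : ℝ) ^ (i + 1)) • (q ^ (i + 1) * p ^ (m - i)) + p ^ (m + 1)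
      = ∑ l ∈ Finset.range (m + 1), ((m.choose l : ℝ) * (-1 : ℝ) ^ l) • (q ^ l * p ^ (m + 1 - l)) := by
    conv_rhs => rw [Finset.sum_range_succ']
    rw [Finset.sum_range_succ, Nat.choose_succ_self]
    rw [Nat.cast_zero, zero_mul, zero_smul, add_zero]
    congr 1
    · refine Finset.sum_congr rfl fun i hi => ?_
      rw [Finset.mem_range] at hi
      rw [show m + 1 - (i + 1) = m - i by omega]
    · simp
  rw [hA]
  rw [show ∀ (A B C : ℍ[ℝ]), -A + B + C = (B + C) - A from fun A B C => by abel]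
  rw [hB]

set_option synthInstance.maxHeartbeats 1000000
set_option maxHeartbeats 2000000

lemma aux_hX2 (k : ℕ) (t s : ℝ) (X S u : ℍ[ℝ]) :
    (k • ((t • (1 : ℍ[ℝ])) * X)) * S * (s • u) = k • ((t * s) • (X * (S * u))) := by
  simp only [smul_mul_assoc, mul_smul_comm, smul_smul, one_mul, mul_assoc]
  module

lemma aux_hX3 (k : ℕ) (t : ℝ) (A X S : ℍ[ℝ]) :
    (k • ((t • A) * X)) * S = k • (t • (A * X * S)) := by
  simp only [smul_mul_assoc]

lemma key (q : ℍ[ℝ]) (m k : ℕ) (hk : 1 ≤ k) (p : ℍ[ℝ]) (hp : Quaternion.im p ≠ 0) (c : ℝ) :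
    Vop (fun x => c • (Qf q x ^ k * Sf q m x)) p
      = (c * (2 * k)) • (Qf q p ^ (k - 1) * Sf q (m + 1) p) := by
  set u : ℍ[ℝ] := Quaternion.im p with hu
  set r : ℍ[ℝ] := ((p.re : ℝ) : ℍ[ℝ]) with hr
  have hu_re : u.re = 0 := Quaternion.re_im p
  have hnu : (‖u‖ ^ 2 : ℝ) ≠ 0 := pow_ne_zero 2 (norm_ne_zero_iff.mpr hp)
  have huu : u * u = -((‖u‖ ^ 2 : ℝ) : ℍ[ℝ]) := im_sq hu_re
  have hup : Commute u p := by
    have h1 : Commute u (r + u) := ((Quaternion.coe_commute p.re u).symm).add_right (Commute.refl u)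
    rwa [hr, re_add_im] at h1
  have hpru : (r + u : ℍ[ℝ]) = p := by rw [hr, hu, re_add_im]
  -- derivative of Qf
  set LQ : ℍ[ℝ] →L[ℝ] ℍ[ℝ] := powCLM (q - r) 2 (-Lc) - powCLM u 2 Ld with hLQ
  have hQ : HasFDerivAt (Qf q) LQ p := by
    rw [Qf_eq q, hLQ, hr, coe_re_eq p, hu, im_eq p]
    exact (hasFDerivAt_pow' ((hc p).const_sub q) 2).sub (hasFDerivAt_pow' (hd p) 2)
  have hQk := hasFDerivAt_pow' hQ k
  -- derivative of Sf
  set LS : ℍ[ℝ] →L[ℝ] ℍ[ℝ] := ∑ l ∈ Finset.range (m + 1),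
      ((m.choose l : ℝ) * (-1 : ℝ) ^ l) •
        (q ^ l • powCLM p (m - l) (ContinuousLinearMap.id ℝ ℍ[ℝ])) with hLS
  have hS : HasFDerivAt (Sf q m) LS p := by
    rw [show Sf q m = fun x => ∑ l ∈ Finset.range (m + 1),
      ((m.choose l : ℝ) * (-1 : ℝ) ^ l) • (q ^ l * x ^ (m - l)) from rfl, hLS]
    refine HasFDerivAt.fun_sum fun l _ => ?_
    exact ((hasFDerivAt_pow' (hasFDerivAt_id p) (m - l)).const_mul (q ^ l)).fun_const_smul ((m.choose l : ℝ) * (-1 : ℝ) ^ l)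
  have hF := hQk.fun_mul' hS
  have hFc := hF.fun_const_smul c
  rw [Vop_apply, hFc.fderiv]
  simp only [← hu]
  simp only [ContinuousLinearMap.smul_apply, ContinuousLinearMap.add_apply,
    ContinuousLinearMap.smulRight_apply, smul_eq_mul, op_smul_eq_mul]
  -- evaluations of LQ
  have hLQ1 : LQ 1 = (-2 : ℝ) • (q - r) := by
    rw [hLQ]
    simp only [ContinuousLinearMap.sub_apply, powCLM_apply, Finset.sum_range_succ,
      Finset.sum_range_zero, ContinuousLinearMap.neg_apply, Lc_one, Ld_one]
    norm_num
    module
  have hLQu : LQ u = (2 * ‖u‖ ^ 2 : ℝ) • (1 : ℍ[ℝ]) := by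
    rw [hLQ]
    simp only [ContinuousLinearMap.sub_apply, powCLM_apply, Finset.sum_range_succ,
      Finset.sum_range_zero, ContinuousLinearMap.neg_apply, Lc_im u hu_re, Ld_im u hu_re]
    norm_num
    rw [huu]
    have hcoe : ((‖u‖ ^ 2 : ℝ) : ℍ[ℝ]) = (‖u‖ ^ 2 : ℝ) • (1 : ℍ[ℝ]) := by
      rw [← Quaternion.algebraMap_def, Algebra.algebraMap_eq_smul_one]
    rw [hcoe]
    module
  -- commutation
  have hQp : Qf q p = (q - r) ^ 2 + ((‖u‖ ^ 2 : ℝ) : ℍ[ℝ]) := rfl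
  have hcomm : Commute (q - r) (Qf q p) := by
    rw [hQp]
    exact ((Commute.refl (q - r)).pow_right 2).add_right ((Quaternion.coe_commute _ _).symm)
  have hc1 : powCLM (Qf q p) k LQ 1 = k • (LQ 1 * Qf q p ^ (k - 1)) := by
    rw [powCLM_apply]
    refine sum_collapse ?_ k
    rw [hLQ1]
    exact hcomm.smul_left _
  have hc2 : powCLM (Qf q p) k LQ u = k • (LQ u * Qf q p ^ (k - 1)) := by
    rw [powCLM_apply]
    refine sum_collapse ?_ k
    rw [hLQu]
    exact (Commute.one_left (Qf q p)).smul_left _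
  -- evaluation of LS
  have hLS1u : LS u = LS 1 * u := by
    rw [hLS]
    simp only [ContinuousLinearMap.sum_apply, ContinuousLinearMap.smul_apply, powCLM_apply,
      ContinuousLinearMap.id_apply, smul_eq_mul]
    rw [Finset.sum_mul]
    refine Finset.sum_congr rfl fun l _ => ?_
    rw [smul_mul_assoc]
    congr 1
    rw [mul_assoc]
    congr 1
    rw [Finset.sum_mul]
    refine Finset.sum_congr rfl fun i _ => ?_
    rw [one_mul, (hup.pow_right _).eq, ← mul_assoc]
  rw [hc1, hc2, hLS1u, hLQ1, hLQu]
  -- rearrangements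
  have hX1 : (Qf q p ^ k * (LS 1 * u)) * ((‖u‖ ^ 2)⁻¹ • u) = -(Qf q p ^ k * LS 1) := by
    rw [← mul_assoc, mul_smul_comm, mul_assoc, huu, mul_neg, mul_coe_eq_smul, smul_neg, smul_smul,
      inv_mul_cancel₀ hnu, one_smul]
  have hX2 : (k • (((2 * ‖u‖ ^ 2 : ℝ) • (1 : ℍ[ℝ])) * Qf q p ^ (k - 1))) * Sf q m p *
      ((‖u‖ ^ 2)⁻¹ • u)
      = k • ((2 : ℝ) • (Qf q p ^ (k - 1) * (Sf q m p * u))) := by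
    rw [aux_hX2, show (2 * ‖u‖ ^ 2 : ℝ) * (‖u‖ ^ 2)⁻¹ = 2 by field_simp]
  have hX3 : (k • (((-2 : ℝ) • (q - r)) * Qf q p ^ (k - 1))) * Sf q m p
      = k • ((-2 : ℝ) • (Qf q p ^ (k - 1) * (q * Sf q m p) - Qf q p ^ (k - 1) * (Sf q m p * r))) := by
    have hin : (q - r) * Sf q m p = q * Sf q m p - Sf q m p * r := by
      rw [sub_mul, hr, Quaternion.coe_commutes]
    rw [aux_hX3, (hcomm.pow_right (k - 1)).eq, mul_assoc, hin, mul_sub]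
  have hS' : Qf q p ^ (k - 1) * Sf q (m + 1) p
      = Qf q p ^ (k - 1) * (Sf q m p * r) + Qf q p ^ (k - 1) * (Sf q m p * u) -
        Qf q p ^ (k - 1) * (q * Sf q m p) := by
    rw [Sf_succ, ← hpru]
    noncomm_ring
  rw [hX3, smul_mul_assoc c, add_mul, hX1, hX2, hS']
  module

end VAux

/-- Iterated application of the right global operator to the spherical building blocks:
`V^m(Q_p^n(q)) = 2^m (n!/(n−m)!) Q_p^{n−m}(q) (p−q)^{*m}` (as functions of `p`). -/
theorem Vop_iterate_spherical_block (q : ℍ[ℝ]) (n m : ℕ) (hm : m ≤ n)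
    (p : ℍ[ℝ]) (hp : Quaternion.im p ≠ 0)
    (g : ℍ[ℝ] → ℍ[ℝ])
    (hg : ∀ x : ℍ[ℝ], g x = ((q - (x.re : ℍ[ℝ])) ^ 2 + ((‖Quaternion.im x‖ ^ 2 : ℝ) : ℍ[ℝ])) ^ n) :
    Vop^[m] g p =
      ((2 : ℝ) ^ m * ((n.factorial : ℝ) / ((n - m).factorial : ℝ))) •
        (((q - (p.re : ℍ[ℝ])) ^ 2 + ((‖Quaternion.im p‖ ^ 2 : ℝ) : ℍ[ℝ])) ^ (n - m) *
          ∑ l ∈ Finset.range (m + 1),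
            ((m.choose l : ℝ) * (-1 : ℝ) ^ l) • (q ^ l * p ^ (m - l))) := by
  have main : ∀ m' : ℕ, m' ≤ n → ∀ p' : ℍ[ℝ], Quaternion.im p' ≠ 0 →
      Vop^[m'] g p' = ((2 : ℝ) ^ m' * ((n.factorial : ℝ) / ((n - m').factorial : ℝ))) •
        (VAux.Qf q p' ^ (n - m') * VAux.Sf q m' p') := by
    intro m'
    induction m' with
    | zero =>
        intro _ p' _
        simp only [Function.iterate_zero, id_eq, Nat.sub_zero, pow_zero, one_mul]
        rw [hg p', div_self (by exact_mod_cast n.factorial_ne_zero), one_smul]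
        have hS0 : VAux.Sf q 0 p' = 1 := by simp [VAux.Sf]
        rw [hS0, mul_one]
        rfl
    | succ m' ih =>
        intro hm' p' hp'
        have hm'' : m' ≤ n := by omega
        have hopen : IsOpen {x : ℍ[ℝ] | Quaternion.im x ≠ 0} :=
          isOpen_compl_singleton.preimage continuous_im
        have hev : Vop^[m'] g =ᶠ[nhds p']
            (fun x => ((2 : ℝ) ^ m' * ((n.factorial : ℝ) / ((n - m').factorial : ℝ))) •
              (VAux.Qf q x ^ (n - m') * VAux.Sf q m' x)) := by
          filter_upwards [hopen.mem_nhds hp'] with x hx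
          exact ih hm'' x hx
        rw [Function.iterate_succ_apply']
        rw [VAux.Vop_congr (hev.fderiv_eq)]
        rw [VAux.key q m' (n - m') (by omega) p' hp'
          ((2 : ℝ) ^ m' * ((n.factorial : ℝ) / ((n - m').factorial : ℝ)))]
        rw [show n - m' - 1 = n - (m' + 1) by omega]
        congr 1
        have hd : n - m' = (n - (m' + 1)) + 1 := by omega
        rw [hd]
        set a := n - (m' + 1) with ha
        have hne : ((a.factorial : ℕ) : ℝ) ≠ 0 := by exact_mod_cast Nat.factorial_ne_zero _
        have h1 : (((a + 1 : ℕ)) : ℝ) ≠ 0 := by exact_mod_cast Nat.succ_ne_zero a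
        rw [Nat.factorial_succ, Nat.cast_mul, pow_succ]
        field_simp
  exact main m hm p hp
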